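/- There exists a constant C > 0 such that for all natural numbers j < k, ∑_{1 ≤ i₁ < i₂ < i₃ < i₄ ≤ k−j} g(i₁) g(i₂−i₁) g(i₃−i₂) g(i₄−i₃) ≤ C (k−j)². -/

import Mathlib

/-!
Since $\binom{2n}{n}^2 (2n+1) \le 16^n$, we have $g(a) \le a^{-1/2}$ for $a \ge 1$, hence
$\sum_{a=1}^m g(a) \le 2\sqrt m$. The increments $i_1, i_2 - i_1, i_3 - i_2, i_4 - i_3$ of the
nested sum lie in $[1, m]$ and determine the indices, so by nonnegativity the sum is at most
$(\sum_{a=1}^m g(a))^4 \le 16 m^2$.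
-/

/-- Return probabilities of the simple symmetric random walk. -/
noncomputable def gfun (k : ℕ) : ℝ :=
  if Even k then (Nat.choose k (k / 2) : ℝ) / 2 ^ k else 0

open Finset

theorem Nat.centralBinom_sq_mul_le (n : ℕ) : n.centralBinom ^ 2 * (2 * n + 1) ≤ 16 ^ n := by
  induction n with
  | zero => simp
  | succ n ih =>
    have hrec := Nat.succ_mul_centralBinom_succ n
    refine Nat.le_of_mul_le_mul_left ?_ (by positivity : 0 < (n + 1) ^ 2)
    calc (n + 1) ^ 2 * ((n + 1).centralBinom ^ 2 * (2 * (n + 1) + 1))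
        = 4 * (2 * n + 3) * (2 * n + 1) * (n.centralBinom ^ 2 * (2 * n + 1)) := by
          rw [← mul_assoc, ← mul_pow, hrec]; ring
      _ ≤ 4 * (2 * n + 3) * (2 * n + 1) * 16 ^ n := by gcongr
      _ ≤ 16 * (n + 1) ^ 2 * 16 ^ n := Nat.mul_le_mul_right _ (by nlinarith)
      _ = (n + 1) ^ 2 * 16 ^ (n + 1) := by ring

lemma gfun_nonneg (a : ℕ) : 0 ≤ gfun a := by
  unfold gfun; split <;> positivity

lemma gfun_sq_mul_le_one (a : ℕ) : gfun a ^ 2 * a ≤ 1 := by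
  rcases Nat.even_or_odd a with ⟨n, rfl⟩ | hodd
  · have hchoose : (n + n).choose ((n + n) / 2) = n.centralBinom := by
      rw [Nat.centralBinom_eq_two_mul_choose]; congr 1 <;> omega
    have hcb : ((n.centralBinom ^ 2 * (2 * n + 1) : ℕ) : ℝ) ≤ 16 ^ n := by
      exact_mod_cast Nat.centralBinom_sq_mul_le n
    have h16 : ((2 : ℝ) ^ (n + n)) ^ 2 = 16 ^ n := by
      rw [← pow_mul, show (n + n) * 2 = 4 * n by ring, pow_mul]; norm_num
    rw [gfun, if_pos ⟨n, rfl⟩, hchoose, div_pow, div_mul_eq_mul_div, div_le_one (by positivity),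
      h16]
    push_cast at hcb ⊢
    nlinarith [sq_nonneg (n.centralBinom : ℝ)]
  · simp [gfun, Nat.not_even_iff_odd.mpr hodd]

lemma gfun_le_inv_sqrt {a : ℕ} (ha : a ≠ 0) : gfun a ≤ (√a)⁻¹ := by
  have hpos : 0 < √(a : ℝ) := Real.sqrt_pos.mpr (by positivity)
  rw [← one_div, le_div_iff₀ hpos]
  have hsq : (gfun a * √a) ^ 2 ≤ 1 := by
    rw [mul_pow, Real.sq_sqrt (by positivity)]; exact gfun_sq_mul_le_one a
  nlinarith [mul_nonneg (gfun_nonneg a) hpos.le]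

lemma sum_Icc_inv_sqrt_le (m : ℕ) : ∑ a ∈ Icc 1 m, (√a)⁻¹ ≤ 2 * √m := by
  induction m with
  | zero => simp
  | succ m ih =>
    rw [sum_Icc_succ_top (by omega)]
    have hstep : (√(m + 1 : ℕ))⁻¹ ≤ 2 * (√(m + 1 : ℕ) - √m) := by
      have hy : 0 < √((m + 1 : ℕ) : ℝ) := Real.sqrt_pos.mpr (by positivity)
      have hxy : √(m : ℝ) ≤ √((m + 1 : ℕ) : ℝ) := Real.sqrt_le_sqrt (by push_cast; linarith)
      have hsq : √((m + 1 : ℕ) : ℝ) ^ 2 = √(m : ℝ) ^ 2 + 1 := by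
        rw [Real.sq_sqrt (by positivity), Real.sq_sqrt (by positivity)]; push_cast; ring
      rw [inv_le_iff_one_le_mul₀' hy]
      nlinarith [sq_nonneg (√((m + 1 : ℕ) : ℝ) - √m)]
    linarith

lemma sum_Icc_gfun_le (m : ℕ) : ∑ a ∈ Icc 1 m, gfun a ≤ 2 * √m :=
  (sum_le_sum fun a ha => gfun_le_inv_sqrt (by simp at ha; omega)).trans (sum_Icc_inv_sqrt_le m)

def posConv (F h : ℕ → ℝ) (n : ℕ) : ℝ := ∑ i ∈ Ico 1 n, F i * h (n - i)

lemma posConv_nonneg {F h : ℕ → ℝ} (hF : ∀ i, 0 ≤ F i) (hh : ∀ i, 0 ≤ h i) (n : ℕ) :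
    0 ≤ posConv F h n :=
  sum_nonneg fun _ _ => mul_nonneg (hF _) (hh _)

lemma sum_Ioc_sub_le_sum_Icc {h : ℕ → ℝ} (hh : ∀ i, 0 ≤ h i) (i m : ℕ) :
    ∑ n ∈ Ioc i m, h (n - i) ≤ ∑ a ∈ Icc 1 m, h a := by
  rw [← sum_image (g := fun n => n - i) (by intro x hx y hy hxy; simp at hx hy hxy; omega)]
  exact sum_le_sum_of_subset_of_nonneg (by intro a; simp; omega) fun _ _ _ => hh _

lemma sum_posConv_le {F h : ℕ → ℝ} (hF : ∀ i, 0 ≤ F i) (hh : ∀ i, 0 ≤ h i) (m : ℕ) :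
    ∑ n ∈ Icc 1 m, posConv F h n ≤ (∑ i ∈ Icc 1 m, F i) * ∑ a ∈ Icc 1 m, h a := by
  calc ∑ n ∈ Icc 1 m, posConv F h n = ∑ i ∈ Icc 1 m, F i * ∑ n ∈ Ioc i m, h (n - i) := by
        simp only [posConv, mul_sum]
        exact sum_comm' (by intro n i; simp; omega)
    _ ≤ ∑ i ∈ Icc 1 m, F i * ∑ a ∈ Icc 1 m, h a :=
        sum_le_sum fun i _ => mul_le_mul_of_nonneg_left (sum_Ioc_sub_le_sum_Icc hh i m) (hF i)
    _ = _ := (sum_mul ..).symm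

theorem quadruple_sum_gggg_bound :
    ∃ C : ℝ, 0 < C ∧ ∀ j k : ℕ, j < k →
      ∑ i₄ ∈ Finset.Icc 1 (k - j), ∑ i₃ ∈ Finset.Ico 1 i₄,
        ∑ i₂ ∈ Finset.Ico 1 i₃, ∑ i₁ ∈ Finset.Ico 1 i₂,
          gfun i₁ * gfun (i₂ - i₁) * gfun (i₃ - i₂) * gfun (i₄ - i₃) ≤
        C * ((k : ℝ) - j) ^ 2 := by
  refine ⟨16, by norm_num, fun j k hjk => ?_⟩
  rw [← Nat.cast_sub hjk.le]
  set m := k - j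
  set P := ∑ a ∈ Icc 1 m, gfun a
  have hP : 0 ≤ P := sum_nonneg fun a _ => gfun_nonneg a
  have hconv₂ := posConv_nonneg gfun_nonneg gfun_nonneg
  have hconv₃ := posConv_nonneg hconv₂ gfun_nonneg
  calc ∑ i₄ ∈ Icc 1 m, ∑ i₃ ∈ Ico 1 i₄, ∑ i₂ ∈ Ico 1 i₃, ∑ i₁ ∈ Ico 1 i₂,
          gfun i₁ * gfun (i₂ - i₁) * gfun (i₃ - i₂) * gfun (i₄ - i₃)
        = ∑ n ∈ Icc 1 m, posConv (posConv (posConv gfun gfun) gfun) gfun n := by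
          simp only [posConv, sum_mul]
    _ ≤ (∑ n ∈ Icc 1 m, posConv (posConv gfun gfun) gfun n) * P :=
          sum_posConv_le hconv₃ gfun_nonneg m
    _ ≤ (∑ n ∈ Icc 1 m, posConv gfun gfun n) * P * P :=
          mul_le_mul_of_nonneg_right (sum_posConv_le hconv₂ gfun_nonneg m) hP
    _ ≤ P * P * P * P :=
          mul_le_mul_of_nonneg_right
            (mul_le_mul_of_nonneg_right (sum_posConv_le gfun_nonneg gfun_nonneg m) hP) hP
    _ = P ^ 4 := by ring
    _ ≤ (2 * √m) ^ 4 := pow_le_pow_left₀ hP (sum_Icc_gfun_le m) 4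
    _ = 16 * (m : ℝ) ^ 2 := by
          rw [show (2 * √(m : ℝ)) ^ 4 = 16 * (√(m : ℝ) ^ 2) ^ 2 by ring, Real.sq_sqrt m.cast_nonneg]
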